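/- arXiv:1812.10363 — 2 statements merged into one kernel-verified Lean document; each statement's English description precedes it below -/
import Mathlib

section
/- In a Kripke model satisfying R_k reflexive, R_b serial, R_b ⊆ R_k, R_b∘R_k ⊆ R_b, and the PR condition (⟨i,α⟩⊤ at w implies B_i pre_s(α) at w, where pre_s(α) is the safety precondition of α), the following holds at every world w: if ⟨i,α⟩⊤ holds at w and pre_s(α) is false at w, then ¬K_i pre_s(α) and ¬K_i ¬K_i pre_s(α) both hold at w; that is, an agent who executes an unsafe action lacks negative introspection of the action's safety precondition. -/
def Box {W : Type*} (R : W → W → Prop) (φ : W → Prop) (w : W) : Prop :=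
  ∀ v, R w v → φ v

/-- An agent executing an unsafe action lacks negative introspection of the
    action's safety precondition: under `R_k` reflexive, `R_b` serial,
    `R_b ⊆ R_k`, `R_b ∘ R_k ⊆ R_b`, and PR (`Exec w → B pre_s` at `w`),
    if the agent executes α at `w` and `pre_s` is false at `w`, then
    `¬K pre_s` and `¬K ¬K pre_s` hold at `w`. -/
theorem unsafe_action_neg_intro_failure {W : Type*} (Rk Rb : W → W → Prop)
    (Exec preS : W → Prop)
    (hrefl : ∀ w, Rk w w) (hser : ∀ w, ∃ v, Rb w v)
    (hsub : ∀ w v, Rb w v → Rk w v)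
    (hcomp : ∀ w v u, Rb w v → Rk v u → Rb w u)
    (hPR : ∀ w, Exec w → Box Rb preS w)
    (w : W) (hexec : Exec w) (hunsafe : ¬ preS w) :
    ¬ Box Rk preS w ∧ ¬ Box Rk (fun v => ¬ Box Rk preS v) w := by
  constructor
  · intro h; exact hunsafe (h w (hrefl w))
  · intro h
    obtain ⟨v, hv⟩ := hser w
    exact h v (hsub w v hv) (fun u hu => hPR w hexec u (hcomp w v u hv hu))
end

section
/- In the DASL Hilbert system (K is a T modality, B is a normal KD45 modality, K φ → B φ, B φ → B K φ), the formula B φ → ¬K ¬K φ is derivable: if an agent believes φ, she does not know that she does not know φ. -/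
/-- Formulas of the modal language with knowledge `K` and belief `B`. -/
inductive Fm : Type
  | atom : ℕ → Fm
  | bot  : Fm
  | imp  : Fm → Fm → Fm
  | K    : Fm → Fm
  | B    : Fm → Fm

namespace Fm

/-- Negation, defined classical-style. -/
def neg (φ : Fm) : Fm := imp φ bot

/-- Hilbert-style derivability for the DASL static fragment:
    propositional tautologies (via the Hilbert K and S schemes together with
    double-negation elimination), Modus Ponens, K-distribution and
    necessitation for both `K` and `B`, `K_T`, `B_Serial`, `B_4`, `B_5`,
    `K_B`, and `B_BK`. -/
inductive Thm : Fm → Prop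
  | hilbertK (p q : Fm) : Thm (imp p (imp q p))
  | hilbertS (p q r : Fm) :
      Thm (imp (imp p (imp q r)) (imp (imp p q) (imp p r)))
  | dne (p : Fm) : Thm (imp (neg (neg p)) p)
  | mp {p q : Fm} : Thm (imp p q) → Thm p → Thm q
  | kNec {p : Fm} : Thm p → Thm (K p)
  | kDist (p q : Fm) : Thm (imp (K (imp p q)) (imp (K p) (K q)))
  | kT (p : Fm) : Thm (imp (K p) p)
  | bNec {p : Fm} : Thm p → Thm (B p)
  | bDist (p q : Fm) : Thm (imp (B (imp p q)) (imp (B p) (B q)))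
  | bSerial (p : Fm) : Thm (imp (B p) (neg (B (neg p))))
  | b4 (p : Fm) : Thm (imp (B p) (B (B p)))
  | b5 (p : Fm) : Thm (imp (neg (B p)) (B (neg (B p))))
  | kB (p : Fm) : Thm (imp (K p) (B p))
  | bBK (p : Fm) : Thm (imp (B p) (B (K p)))

end Fm

open Fm

/-- Transitivity of implication at the object level. -/
lemma thm_trans {p q r : Fm} (h1 : Thm (imp p q)) (h2 : Thm (imp q r)) :
    Thm (imp p r) :=
  Thm.mp (Thm.mp (Thm.hilbertS p q r) (Thm.mp (Thm.hilbertK (imp q r) p) h2)) h1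

/-- From `p → (q → r)` and `q`, derive `p → r`. -/
lemma thm_mp_under {p q r : Fm} (h1 : Thm (imp p (imp q r))) (h2 : Thm q) :
    Thm (imp p r) :=
  Thm.mp (Thm.mp (Thm.hilbertS p q r) h1) (Thm.mp (Thm.hilbertK q p) h2)

/-- From `c → b`, derive `(b → ⊥) → (c → ⊥)`. -/
lemma thm_contra {b c : Fm} (h : Thm (imp c b)) :
    Thm (imp (imp b bot) (imp c bot)) :=
  thm_mp_under
    (thm_trans (Thm.hilbertK (imp b bot) c)
      (Thm.hilbertS c b bot)) h

/-- In the DASL Hilbert system, `B φ → ¬K ¬K φ` is derivable: a believing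
    agent does not know that she does not know. -/
theorem belief_implies_not_know_not_know_derivable (φ : Fm) :
    Thm (imp (B φ) (neg (K (neg (K φ))))) := by
  have h1 : Thm (imp (B φ) (neg (B (neg (K φ))))) :=
    thm_trans (Thm.bBK φ) (Thm.bSerial (K φ))
  have h2 : Thm (imp (K (neg (K φ))) (B (neg (K φ)))) := Thm.kB _
  exact thm_trans h1 (thm_contra h2)
end
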